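/- arXiv:math/0511248 — 2 statements merged into one kernel-verified Lean document; each statement's English description precedes it below -/
import Mathlib

section
/- If a complex polynomial f has no repeated roots, then the curve C_θ(f) = {z : Im(e^{-iθ} f(z)) = 0} is singular for at most deg(f) - 1 values of θ in ℝ/πℤ. If f has a repeated root, then C_θ(f) is singular for every θ. -/
/-!
If `f` has a repeated root `z`, then `f(z) = f'(z) = 0`, so `z` is singular on
every curve. If the roots of `f` are simple, every critical point `z` has `f(z) ≠ 0`, and then
`e^{-iθ} f(z)` is real only for `θ ≡ arg f(z) (mod π)`; so each of the at most `n - 1` distinct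
critical points accounts for at most one `θ ∈ [0, π)`.
-/

/-- The curve `C_θ(f)` is singular iff some critical point of `f` lies on it. -/
def CurveSingular (f : Polynomial ℂ) (θ : ℝ) : Prop :=
  ∃ z : ℂ, (Complex.exp (-(θ : ℂ) * Complex.I) * f.eval z).im = 0 ∧
    f.derivative.eval z = 0

open Polynomial Real Set

theorem Polynomial.not_nodup_roots_iff_exists_isRoot_derivative {R : Type*} [CommRing R]
    [IsDomain R] {f : R[X]} (hf : f ≠ 0) :
    ¬ f.roots.Nodup ↔ ∃ z, f.IsRoot z ∧ f.derivative.IsRoot z := by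
  classical
  simp only [Multiset.nodup_iff_count_le_one, not_forall, not_le, count_roots,
    one_lt_rootMultiplicity_iff_isRoot hf]

theorem Complex.im_exp_neg_mul_I_mul (θ : ℝ) (w : ℂ) :
    (exp (-(θ : ℂ) * I) * w).im = ‖w‖ * Real.sin (w.arg - θ) := by
  conv_lhs => rw [← norm_mul_exp_arg_mul_I w]
  rw [mul_left_comm, ← exp_add, show -(θ : ℂ) * I + w.arg * I = ((w.arg - θ : ℝ) : ℂ) * I by
    push_cast; ring, im_ofReal_mul, exp_ofReal_mul_I_im]

theorem Complex.eq_toIcoMod_arg_of_im_exp_neg_mul_I_mul_eq_zero {θ : ℝ} (hθ : θ ∈ Ico 0 π)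
    {w : ℂ} (hw : w ≠ 0) (h : (exp (-(θ : ℂ) * I) * w).im = 0) :
    θ = toIcoMod pi_pos 0 w.arg := by
  rw [im_exp_neg_mul_I_mul, mul_eq_zero, norm_eq_zero, or_iff_right hw,
    Real.sin_eq_zero_iff] at h
  obtain ⟨k, hk⟩ := h
  rw [show w.arg = θ + k • π by rw [zsmul_eq_mul]; linarith, toIcoMod_add_zsmul,
    (toIcoMod_eq_self pi_pos).2 (by rwa [zero_add])]

theorem curveSingular_of_not_nodup_roots {f : ℂ[X]} (hf : ¬ f.roots.Nodup) (θ : ℝ) :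
    CurveSingular f θ := by
  have hf0 : f ≠ 0 := by rintro rfl; simp at hf
  obtain ⟨z, hz, hz'⟩ := (not_nodup_roots_iff_exists_isRoot_derivative hf0).1 hf
  exact ⟨z, by simp [hz.eq_zero], hz'.eq_zero⟩

theorem setOf_curveSingular_subset_image_roots_derivative {f : ℂ[X]} (hf : 0 < f.natDegree)
    (hnodup : f.roots.Nodup) :
    {θ ∈ Ico 0 π | CurveSingular f θ} ⊆
      f.derivative.roots.toFinset.image (fun z ↦ toIcoMod pi_pos 0 (f.eval z).arg) := by
  rintro θ ⟨hθ, z, him, hcrit⟩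
  have hfz : f.eval z ≠ 0 := fun hz ↦
    (not_nodup_roots_iff_exists_isRoot_derivative (ne_zero_of_natDegree_gt hf)).2
      ⟨z, hz, hcrit⟩ hnodup
  have hf' : f.derivative ≠ 0 := fun h ↦ hf.ne' (derivative_eq_zero.1 h)
  simp only [Finset.coe_image, mem_image, Finset.mem_coe, Multiset.mem_toFinset, mem_roots hf']
  exact ⟨z, hcrit, (Complex.eq_toIcoMod_arg_of_im_exp_neg_mul_I_mul_eq_zero hθ hfz him).symm⟩

theorem Polynomial.card_roots_toFinset_derivative_le {R : Type*} [CommRing R] [IsDomain R]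
    [DecidableEq R] (f : R[X]) :
    f.derivative.roots.toFinset.card ≤ f.natDegree - 1 :=
  (Multiset.toFinset_card_le _).trans <| (card_roots' _).trans (natDegree_derivative_le f)

theorem stmt_12 (f : Polynomial ℂ) (n : ℕ) (hn : 1 ≤ n) (hdeg : f.natDegree = n) :
    (f.roots.Nodup →
      {θ ∈ Set.Ico 0 Real.pi | CurveSingular f θ}.Finite ∧
      {θ ∈ Set.Ico 0 Real.pi | CurveSingular f θ}.ncard ≤ n - 1) ∧
    (¬ f.roots.Nodup → ∀ θ : ℝ, CurveSingular f θ) := by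
  refine ⟨fun hnodup ↦ ?_, curveSingular_of_not_nodup_roots⟩
  have hsub := setOf_curveSingular_subset_image_roots_derivative (hdeg ▸ hn) hnodup
  refine ⟨(Finset.finite_toSet _).subset hsub, ?_⟩
  calc _ ≤ _ := ncard_le_ncard hsub (Finset.finite_toSet _)
    _ ≤ f.derivative.roots.toFinset.card := by rw [ncard_coe_finset]; exact Finset.card_image_le
    _ ≤ n - 1 := hdeg ▸ card_roots_toFinset_derivative_le f
end

section
/- Let f be a nonconstant complex polynomial and θ ∈ ℝ such that C_θ(f) = {z : Im(e^{-iθ} f(z)) = 0} is nonsingular (i.e., f'(z) ≠ 0 for all z ∈ C_θ(f)). Then C_θ(f) has no nonempty bounded connected component. -/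
/-!
A bounded component `K` of `{Im g = a}` would be compact, so `Re g` attains a maximum on `K` at
some `z₀`. Since `g' z₀ ≠ 0`, `g` is a local homeomorphism at `z₀`, and pulling back a short
horizontal segment through `g z₀` gives a connected piece of `{Im g = a}` through `z₀`, hence
inside `K`, on which `Re g` exceeds `Re g z₀`.
-/

open Bornology

theorem IsClosed.connectedComponentIn {X : Type*} [TopologicalSpace X] {s : Set X}
    (hs : IsClosed s) (x : X) : IsClosed (connectedComponentIn s x) := by
  by_cases hx : x ∈ s
  · refine isClosed_of_closure_subset ?_
    exact isPreconnected_connectedComponentIn.closure.subset_connectedComponentIn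
      (subset_closure (mem_connectedComponentIn hx))
      (hs.closure_subset_iff.2 (connectedComponentIn_subset s x))
  · rw [connectedComponentIn_eq_empty hx]
    exact isClosed_empty

theorem HasStrictDerivAt.exists_isPreconnected_im_eq_re_gt {g : ℂ → ℂ} {g' z₀ : ℂ}
    (hg : HasStrictDerivAt g g' z₀) (hg' : g' ≠ 0) :
    ∃ A : Set ℂ, IsPreconnected A ∧ z₀ ∈ A ∧ A ⊆ {w | (g w).im = (g z₀).im} ∧
      ∃ w ∈ A, (g z₀).re < (g w).re := by
  have hF := hg.hasStrictFDerivAt_equiv hg'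
  set e := hF.toOpenPartialHomeomorph g
  have he : ⇑e = g := hF.toOpenPartialHomeomorph_coe
  obtain ⟨δ, hδ, hball⟩ :=
    Metric.isOpen_iff.1 e.open_target (g z₀) hF.image_mem_toOpenPartialHomeomorph_target
  set S : Set ℂ := {y | y.im = (g z₀).im} ∩ Metric.ball (g z₀) δ
  have hS : S ⊆ e.target := Set.inter_subset_right.trans hball
  have hgS : ∀ y ∈ S, g (e.symm y) = y := fun y hy => he ▸ e.right_inv (hS hy)
  have hSconn : IsPreconnected S :=
    ((convex_hyperplane Complex.imLm.isLinear _).inter (convex_ball _ _)).isPreconnected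
  have hmem : g z₀ + ((δ / 2 : ℝ) : ℂ) ∈ S := by
    refine ⟨by simp, ?_⟩
    rw [Metric.mem_ball, dist_self_add_left, Complex.norm_real, Real.norm_of_nonneg (by positivity)]
    linarith
  refine ⟨e.symm '' S, hSconn.image _ (e.continuousOn_symm.mono hS), ⟨g z₀, ?_, ?_⟩, ?_,
    _, Set.mem_image_of_mem _ hmem, ?_⟩
  · exact ⟨rfl, Metric.mem_ball_self hδ⟩
  · exact he ▸ e.left_inv hF.mem_toOpenPartialHomeomorph_source
  · rintro _ ⟨y, hy, rfl⟩
    show (g (e.symm y)).im = _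
    rw [hgS y hy]
    exact hy.1
  · rw [hgS _ hmem, Complex.add_re, Complex.ofReal_re]
    linarith

theorem not_isBounded_connectedComponentIn_im_eq {g : ℂ → ℂ} (hg : Continuous g) {a : ℝ}
    (hreg : ∀ z, (g z).im = a → ∃ g', HasStrictDerivAt g g' z ∧ g' ≠ 0)
    {z : ℂ} (hz : (g z).im = a) :
    ¬ IsBounded (connectedComponentIn {w | (g w).im = a} z) := by
  set C := {w | (g w).im = a}
  intro hb
  have hC : IsClosed C := isClosed_eq (Complex.continuous_im.comp hg) continuous_const
  have hK : IsCompact (connectedComponentIn C z) :=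
    Metric.isCompact_of_isClosed_isBounded (hC.connectedComponentIn z) hb
  obtain ⟨z₀, hz₀, hmax⟩ := hK.exists_isMaxOn ⟨z, mem_connectedComponentIn hz⟩
    (Complex.continuous_re.comp hg).continuousOn
  have hz₀C : (g z₀).im = a := connectedComponentIn_subset C z hz₀
  obtain ⟨g', hg', hg'0⟩ := hreg z₀ hz₀C
  obtain ⟨A, hAconn, hz₀A, hAC, w, hwA, hw⟩ := hg'.exists_isPreconnected_im_eq_re_gt hg'0
  rw [hz₀C] at hAC
  have hAK : A ⊆ connectedComponentIn C z :=
    connectedComponentIn_eq hz₀ ▸ hAconn.subset_connectedComponentIn hz₀A hAC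
  exact (hmax (hAK hwA)).not_gt hw

theorem stmt_17_general (f : Polynomial ℂ) (θ : ℝ)
    (hns : ∀ z : ℂ, (Complex.exp (-(θ : ℂ) * Complex.I) * f.eval z).im = 0 →
      f.derivative.eval z ≠ 0) :
    ∀ z ∈ {w : ℂ | (Complex.exp (-(θ : ℂ) * Complex.I) * f.eval w).im = 0},
      ¬ Bornology.IsBounded
        (connectedComponentIn
          {w : ℂ | (Complex.exp (-(θ : ℂ) * Complex.I) * f.eval w).im = 0} z) :=
  fun _ hz => not_isBounded_connectedComponentIn_im_eq (continuous_const.mul f.continuous)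
    (fun z hz => ⟨_, (f.hasStrictDerivAt z).const_mul _,
      mul_ne_zero (Complex.exp_ne_zero _) (hns z hz)⟩) hz

theorem stmt_17 (f : Polynomial ℂ) (hdeg : 0 < f.natDegree) (θ : ℝ)
    (hns : ∀ z : ℂ, (Complex.exp (-(θ : ℂ) * Complex.I) * f.eval z).im = 0 →
      f.derivative.eval z ≠ 0) :
    ∀ z ∈ {w : ℂ | (Complex.exp (-(θ : ℂ) * Complex.I) * f.eval w).im = 0},
      ¬ Bornology.IsBounded
        (connectedComponentIn
          {w : ℂ | (Complex.exp (-(θ : ℂ) * Complex.I) * f.eval w).im = 0} z) :=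
  stmt_17_general f θ hns
end
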